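/- arXiv:1804.04322 — 2 statements merged into one kernel-verified Lean document; each statement's English description precedes it below -/
import Mathlib

section
/- If G is a 2×2 complex matrix satisfying ‖G^j‖ ≤ M for all 1 ≤ j ≤ N (with M ≥ 1), and G_1,…,G_N are 2×2 matrices with ‖G_j − G‖ ≤ δ for all j, and N·M·δ < 1/2, then for every 1 ≤ n ≤ N the ordered product G_n·G_{n−1}···G_1 satisfies ‖G_n···G_1 − G^n‖ ≤ 2·N·M²·δ. -/
open scoped Matrix.Norms.L2Operator

/-!
Writing `P n = G_n ⋯ G_1`, Duhamel's formula
`P n - G ^ n = ∑_{k < n} G ^ (n - 1 - k) * (G_{k+1} - G) * P k`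
bounds the error by `n * M * δ * sup_{k < n} ‖P k‖`. A bootstrap then shows `‖P k‖ ≤ 2 M` for
`k ≤ N`: if it holds below `n`, the error at `n` is at most `2 n M² δ ≤ M` since `N M δ ≤ 1/2`,
so `‖P n‖ ≤ ‖G ^ n‖ + M ≤ 2 M`. Feeding `2 M` back into the error bound gives `2 n M² δ`.
-/

theorem List.prod_map_reverse_range'_succ {M : Type*} [Monoid M] (f : ℕ → M) (n : ℕ) :
    ((List.range' 1 (n + 1)).reverse.map f).prod
      = f (n + 1) * ((List.range' 1 n).reverse.map f).prod := by
  simp [List.range'_concat, add_comm]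

section Perturbation

variable {R : Type*} [NormedRing R] {G : R} {A P : ℕ → R}

theorem sub_pow_mul_eq_sum (hP : ∀ k, P (k + 1) = A (k + 1) * P k) (n : ℕ) :
    P n - G ^ n * P 0 = ∑ k ∈ Finset.range n, G ^ (n - 1 - k) * ((A (k + 1) - G) * P k) := by
  induction n with
  | zero => simp
  | succ n ih =>
    have hsplit : P (n + 1) - G ^ (n + 1) * P 0
        = G * (P n - G ^ n * P 0) + (A (n + 1) - G) * P n := by
      rw [hP, pow_succ']
      noncomm_ring
    rw [hsplit, ih, Finset.mul_sum, Finset.sum_range_succ, Nat.add_sub_cancel, Nat.sub_self,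
      pow_zero, one_mul]
    congr 1
    refine Finset.sum_congr rfl fun k hk => ?_
    rw [Finset.mem_range] at hk
    rw [← mul_assoc, ← pow_succ']
    congr 2
    omega

theorem norm_sub_pow_mul_le (hP : ∀ k, P (k + 1) = A (k + 1) * P k) {n : ℕ} {M δ B : ℝ}
    (hpow : ∀ j < n, ‖G ^ j‖ ≤ M) (hclose : ∀ k < n, ‖A (k + 1) - G‖ ≤ δ)
    (hbound : ∀ k < n, ‖P k‖ ≤ B) :
    ‖P n - G ^ n * P 0‖ ≤ n * (M * (δ * B)) := by
  rw [sub_pow_mul_eq_sum hP]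
  calc ‖∑ k ∈ Finset.range n, G ^ (n - 1 - k) * ((A (k + 1) - G) * P k)‖
      ≤ ∑ k ∈ Finset.range n, ‖G ^ (n - 1 - k) * ((A (k + 1) - G) * P k)‖ := norm_sum_le _ _
    _ ≤ ∑ _k ∈ Finset.range n, M * (δ * B) := by
      refine Finset.sum_le_sum fun k hk => ?_
      rw [Finset.mem_range] at hk
      exact norm_mul_le_of_le (hpow _ (by omega))
        (norm_mul_le_of_le (hclose k hk) (hbound k hk))
    _ = n * (M * (δ * B)) := by
      rw [Finset.sum_const, Finset.card_range, nsmul_eq_mul]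

variable {N : ℕ} {M δ : ℝ}

theorem norm_le_two_mul_of_pow_le (hP : ∀ k, P (k + 1) = A (k + 1) * P k) (hP0 : P 0 = 1)
    (hδ : 0 ≤ δ) (hpow : ∀ j ≤ N, ‖G ^ j‖ ≤ M) (hclose : ∀ k < N, ‖A (k + 1) - G‖ ≤ δ)
    (hsmall : N * M * δ ≤ 1 / 2) :
    ∀ n ≤ N, ‖P n‖ ≤ 2 * M := by
  have hM : 0 ≤ M := (norm_nonneg _).trans (hpow 0 (Nat.zero_le N))
  intro n
  induction n using Nat.strong_induction_on with
  | _ n ih =>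
    intro hn
    have herr := norm_sub_pow_mul_le hP (n := n) (B := 2 * M) (fun j hj => hpow j (by omega))
      (fun k hk => hclose k (by omega)) (fun k hk => ih k hk (by omega))
    rw [hP0, mul_one] at herr
    have hnN : (n : ℝ) ≤ N := by exact_mod_cast hn
    have hnMδ : n * M * δ ≤ 1 / 2 :=
      (mul_le_mul_of_nonneg_right (mul_le_mul_of_nonneg_right hnN hM) hδ).trans hsmall
    calc ‖P n‖ ≤ ‖G ^ n‖ + ‖P n - G ^ n‖ := norm_le_insert' _ _
      _ ≤ M + n * (M * (δ * (2 * M))) := add_le_add (hpow n hn) herr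
      _ ≤ 2 * M := by nlinarith

theorem norm_sub_pow_le_of_pow_le (hP : ∀ k, P (k + 1) = A (k + 1) * P k) (hP0 : P 0 = 1)
    (hδ : 0 ≤ δ) (hpow : ∀ j ≤ N, ‖G ^ j‖ ≤ M) (hclose : ∀ k < N, ‖A (k + 1) - G‖ ≤ δ)
    (hsmall : N * M * δ ≤ 1 / 2) {n : ℕ} (hn : n ≤ N) :
    ‖P n - G ^ n‖ ≤ 2 * n * M ^ 2 * δ := by
  have herr := norm_sub_pow_mul_le hP (n := n) (B := 2 * M) (fun j hj => hpow j (by omega))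
    (fun k hk => hclose k (by omega))
    (fun k hk => norm_le_two_mul_of_pow_le hP hP0 hδ hpow hclose hsmall k (by omega))
  rw [hP0, mul_one] at herr
  linarith

end Perturbation

theorem stmt0_general (G : Matrix (Fin 2) (Fin 2) ℂ) (Gs : ℕ → Matrix (Fin 2) (Fin 2) ℂ)
    (N : ℕ) (M δ : ℝ) (hM : 1 ≤ M) (hδ : 0 ≤ δ)
    (hpow : ∀ j : ℕ, 1 ≤ j → j ≤ N → ‖G ^ j‖ ≤ M)
    (hclose : ∀ j : ℕ, 1 ≤ j → j ≤ N → ‖Gs j - G‖ ≤ δ)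
    (hsmall : (N : ℝ) * M * δ < 1 / 2) :
    ∀ n : ℕ, 1 ≤ n → n ≤ N →
      ‖(((List.range' 1 n).reverse.map Gs).prod) - G ^ n‖ ≤ 2 * N * M ^ 2 * δ := by
  intro n _ hn
  have hpow' : ∀ j ≤ N, ‖G ^ j‖ ≤ M := fun j hj => by
    rcases j.eq_zero_or_pos with rfl | hj0
    · simpa using hM
    · exact hpow j hj0 hj
  have herr := norm_sub_pow_le_of_pow_le (P := fun n => ((List.range' 1 n).reverse.map Gs).prod)
    (List.prod_map_reverse_range'_succ Gs) rfl hδ hpow'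
    (fun k hk => hclose (k + 1) (by omega) hk) hsmall.le hn
  have hnN : (n : ℝ) ≤ N := by exact_mod_cast hn
  calc _ ≤ 2 * n * M ^ 2 * δ := herr
    _ ≤ 2 * N * M ^ 2 * δ := by gcongr

/-- If `G` is a 2×2 complex matrix with `‖G^j‖ ≤ M` for all `1 ≤ j ≤ N` (`M ≥ 1`),
and `G_1, …, G_N` satisfy `‖G_j - G‖ ≤ δ`, with `N·M·δ < 1/2`, then for every `1 ≤ n ≤ N`
the ordered product `G_n ⋯ G_1` satisfies `‖G_n ⋯ G_1 - G^n‖ ≤ 2·N·M²·δ`. -/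
theorem stmt0 (G : Matrix (Fin 2) (Fin 2) ℂ) (Gs : ℕ → Matrix (Fin 2) (Fin 2) ℂ)
    (N : ℕ) (hN : 0 < N) (M δ : ℝ) (hM : 1 ≤ M) (hδ : 0 ≤ δ)
    (hpow : ∀ j : ℕ, 1 ≤ j → j ≤ N → ‖G ^ j‖ ≤ M)
    (hclose : ∀ j : ℕ, 1 ≤ j → j ≤ N → ‖Gs j - G‖ ≤ δ)
    (hsmall : (N : ℝ) * M * δ < 1 / 2) :
    ∀ n : ℕ, 1 ≤ n → n ≤ N →
      ‖(((List.range' 1 n).reverse.map Gs).prod) - G ^ n‖ ≤ 2 * N * M ^ 2 * δ :=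
  stmt0_general G Gs N M δ hM hδ hpow hclose hsmall
end

section
/- Let Δ ⊂ [0,1] be an interval with |Δ| > 1/q_n, where q_n is a continued fraction denominator of the irrational α. Then for any θ ∈ [0,1], there exists j ∈ {0, 1, …, q_n + q_{n−1} − 1} such that θ + jα mod 1 ∈ Δ. -/
/-!
Up to swapping them according to the parity of `n`, the denominators `A, B ∈ {q_n, q_{n+1}}`
satisfy `A α ≡ s` and `B α ≡ -t (mod 1)` with `0 < s, t ≤ 1 / q_{n+1} < b - a`. The walk on
`{0, …, A + B - 1}` given by `j ↦ j + A` for `j < B` and `j ↦ j - B` otherwise never leaves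
that range, and lifts `θ + jα` to real numbers that move right by `s` or `t` at each step.
Steps shorter than `b - a` cannot jump over the translate `(a, b) + ⌈θ - a⌉`.
-/

/-- The `n`-th continued fraction denominator of `α`. -/
noncomputable def cfDen (α : ℝ) (n : ℕ) : ℝ := (GenContFract.of α).dens n

section Walk

variable {K : Type*} [Field K] [LinearOrder K] [IsStrictOrderedRing K]

theorem exists_mem_Ioo_of_forall_add_le_lt [Archimedean K] {x : ℕ → K} {c ε L : K} (hε : 0 < ε)
    (h0 : x 0 ≤ c) (hstep : ∀ k, x k + ε ≤ x (k + 1) ∧ x (k + 1) < x k + L) :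
    ∃ k, x k ∈ Set.Ioo c (c + L) := by
  classical
  have hgrowth : ∀ k : ℕ, x 0 + k * ε ≤ x k := by
    intro k
    induction k with
    | zero => simp
    | succ k ih => push_cast; linarith [(hstep k).1]
  have hcross : ∃ k, c < x k := by
    obtain ⟨k, hk⟩ := exists_nat_gt ((c - x 0) / ε)
    exact ⟨k, by linarith [(div_lt_iff₀ hε).1 hk, hgrowth k]⟩
  obtain ⟨i, hi⟩ : ∃ i, Nat.find hcross = i + 1 :=
    Nat.exists_eq_succ_of_ne_zero fun h => (Nat.find_spec hcross).not_ge (h ▸ h0)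
  have hprev : x i ≤ c := not_lt.1 (Nat.find_min hcross (by omega))
  exact ⟨i + 1, hi ▸ Nat.find_spec hcross, by linarith [(hstep i).2]⟩

variable [FloorRing K]

theorem fract_mem_Ioo_of_sub_intCast_mem {t a b : K} (z : ℤ) (ha : 0 ≤ a) (hb : b ≤ 1)
    (h : t - z ∈ Set.Ioo a b) : Int.fract t ∈ Set.Ioo a b := by
  rwa [← Int.fract_sub_intCast t z, Int.fract_eq_self.2 ⟨ha.trans h.1.le, h.2.trans_le hb⟩]

theorem exists_fract_add_mul_mem_Ioo [Archimedean K] {α θ a b : K} {A B : ℕ} {zA zB : ℤ}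
    (ha : 0 ≤ a) (hb : b ≤ 1) (hA : 0 < A * α - zA) (hA' : A * α - zA < b - a)
    (hB : 0 < zB - B * α) (hB' : zB - B * α < b - a) :
    ∃ j < A + B, Int.fract (θ + j * α) ∈ Set.Ioo a b := by
  have hAB : 0 < A + B := by
    by_contra h
    obtain rfl : A = 0 := by omega
    have h1 : (0 : K) < -zA := by simpa using hA
    have h2 : (-zA : K) < 1 := by simp at hA'; linarith
    norm_cast at h1 h2
    omega
  let step : ℕ × ℤ → ℕ × ℤ := fun p =>
    if p.1 < B then (p.1 + A, p.2 + zA) else (p.1 - B, p.2 - zB)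
  let lift : ℕ × ℤ → K := fun p => θ + p.1 * α - p.2
  let walk : ℕ → ℕ × ℤ := fun k => step^[k] (0, 0)
  have hstep_lt : ∀ p : ℕ × ℤ, p.1 < A + B → (step p).1 < A + B := by
    intro p hp
    simp only [step]
    split_ifs <;> omega
  have hstep_lift : ∀ p : ℕ × ℤ, lift (step p) - lift p =
      if p.1 < B then A * α - zA else zB - B * α := by
    intro p
    simp only [step, lift]
    split_ifs with h
    · push_cast; ring
    · push_cast [Nat.cast_sub (not_lt.1 h)]; ring
  have hwalk : ∀ k, (walk k).1 < A + B := by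
    intro k
    induction k with
    | zero => simpa [walk] using hAB
    | succ k ih => simpa only [walk, Function.iterate_succ_apply'] using hstep_lt _ ih
  obtain ⟨k, hk⟩ := exists_mem_Ioo_of_forall_add_le_lt (x := lift ∘ walk) (c := a + ⌈θ - a⌉)
    (L := b - a) (lt_min hA hB) (by simp [lift, walk]; linarith [Int.le_ceil (θ - a)])
    (fun k => by
      have := hstep_lift (walk k)
      simp only [Function.comp, walk, Function.iterate_succ_apply']
      split_ifs at this <;> constructor <;>
        linarith [min_le_left (A * α - zA) (zB - B * α), min_le_right (A * α - zA) (zB - B * α)])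
  refine ⟨(walk k).1, hwalk k, fract_mem_Ioo_of_sub_intCast_mem ((walk k).2 + ⌈θ - a⌉) ha hb ?_⟩
  obtain ⟨hk1, hk2⟩ := hk
  simp only [Function.comp, lift] at hk1 hk2
  push_cast
  constructor <;> linarith

theorem exists_fract_add_mul_mem_Ioo_of_alternating [Archimedean K] {α θ a b : K} {q q' : ℕ}
    {p p' : ℤ} (n : ℕ) (ha : 0 ≤ a) (hb : b ≤ 1)
    (h : 0 < (-1) ^ n * (q * α - p)) (hlt : (-1) ^ n * (q * α - p) < b - a)
    (h' : 0 < (-1) ^ (n + 1) * (q' * α - p')) (hlt' : (-1) ^ (n + 1) * (q' * α - p') < b - a) :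
    ∃ j < q' + q, Int.fract (θ + j * α) ∈ Set.Ioo a b := by
  rcases n.even_or_odd with hn | hn
  · rw [hn.neg_one_pow, one_mul] at h hlt
    rw [hn.add_one.neg_one_pow, neg_one_mul, neg_sub] at h' hlt'
    rw [add_comm]
    exact exists_fract_add_mul_mem_Ioo ha hb h hlt h' hlt'
  · rw [hn.neg_one_pow, neg_one_mul, neg_sub] at h hlt
    rw [hn.add_one.neg_one_pow, one_mul] at h' hlt'
    exact exists_fract_add_mul_mem_Ioo ha hb h' hlt' h hlt

end Walk

namespace GenContFract

open GenContFract (of)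

variable {K : Type*} [Field K] [LinearOrder K] [FloorRing K] {v : K} {n : ℕ}

theorem exists_int_eq_contsAux (v : K) (n : ℕ) : ∃ p q : ℤ, (of v).contsAux n = ⟨p, q⟩ := by
  suffices h : ∀ n, (∃ p q : ℤ, (of v).contsAux n = ⟨p, q⟩) ∧
      ∃ p q : ℤ, (of v).contsAux (n + 1) = ⟨p, q⟩ from (h n).1
  intro n
  induction n with
  | zero =>
    exact ⟨⟨1, 0, by simp [zeroth_contAux_eq_one_zero]⟩,
      ⟨⌊v⌋, 1, by simp [first_contAux_eq_h_one, of_h_eq_floor]⟩⟩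
  | succ n ih =>
    obtain ⟨⟨pp, qp, hpred⟩, ⟨p, q, hcur⟩⟩ := ih
    refine ⟨⟨p, q, hcur⟩, ?_⟩
    cases hs : (of v).s.get? n with
    | none => exact ⟨p, q, (contsAux_stable_step_of_terminated hs).trans hcur⟩
    | some gp =>
      obtain ⟨z, hz⟩ := exists_int_eq_of_partDen (partDen_eq_s_b hs)
      refine ⟨z * p + pp, z * q + qp, ?_⟩
      rw [contsAux_recurrence hs hpred hcur, of_partNum_eq_one (partNum_eq_s_a hs), hz]
      push_cast
      ring_nf

theorem exists_int_eq_nums (v : K) (n : ℕ) : ∃ p : ℤ, (of v).nums n = p := by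
  obtain ⟨p, q, h⟩ := exists_int_eq_contsAux v (n + 1)
  exact ⟨p, by rw [num_eq_conts_a, nth_cont_eq_succ_nth_contAux, h]⟩

variable [IsStrictOrderedRing K]

theorem exists_nat_eq_dens (v : K) (n : ℕ) : ∃ q : ℕ, (of v).dens n = q := by
  obtain ⟨p, q, h⟩ := exists_int_eq_contsAux v (n + 1)
  have hq : (of v).dens n = q := by rw [den_eq_conts_b, nth_cont_eq_succ_nth_contAux, h]
  have hq0 : 0 ≤ q := by exact_mod_cast hq ▸ zero_le_of_den
  obtain ⟨m, rfl⟩ := Int.eq_ofNat_of_zero_le hq0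
  exact ⟨m, by simpa using hq⟩

theorem dens_pos_of_not_terminatedAt (h : ¬(of v).TerminatedAt n) : 0 < (of v).dens n := by
  refine lt_of_lt_of_le (by exact_mod_cast Nat.fib_pos.2 n.succ_pos) (succ_nth_fib_le_of_nth_den ?_)
  rcases n with _ | n
  · exact Or.inl rfl
  · exact Or.inr fun h' => h (terminated_stable n.le_succ h')

theorem zero_lt_neg_one_pow_mul_sub_convs (h : ¬(of v).TerminatedAt n) :
    0 < (-1) ^ n * (v - (of v).convs n) := by
  obtain ⟨ifp_succ, hstream_succ⟩ := Option.ne_none_iff_exists'.1 fun h' =>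
    h (of_terminatedAt_n_iff_succ_nth_intFractPair_stream_eq_none.2 h')
  obtain ⟨ifp, hstream, hfr_ne, -⟩ := IntFractPair.succ_nth_stream_eq_some_iff.1 hstream_succ
  have hfr_pos : 0 < ifp.fr :=
    (IntFractPair.nth_stream_fr_nonneg hstream).lt_of_ne (Ne.symm hfr_ne)
  have hB : 0 < ((of v).contsAux (n + 1)).b := by
    rw [← nth_cont_eq_succ_nth_contAux, ← den_eq_conts_b]
    exact dens_pos_of_not_terminatedAt h
  have hpB : 0 ≤ ((of v).contsAux n).b := zero_le_of_contsAux_b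
  rw [sub_convs_eq hstream, if_neg hfr_ne, ← mul_div_assoc, ← pow_add, ← two_mul, pow_mul,
    neg_one_sq, one_pow]
  positivity

theorem dens_mul_sub_nums_eq (h : ¬(of v).TerminatedAt n) :
    (of v).dens n * v - (of v).nums n = (of v).dens n * (v - (of v).convs n) := by
  rw [conv_eq_num_div_den, mul_sub, mul_div_cancel₀ _ (dens_pos_of_not_terminatedAt h).ne']

theorem zero_lt_neg_one_pow_mul_dens_mul_sub_nums (h : ¬(of v).TerminatedAt n) :
    0 < (-1) ^ n * ((of v).dens n * v - (of v).nums n) := by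
  rw [dens_mul_sub_nums_eq h, mul_left_comm]
  exact mul_pos (dens_pos_of_not_terminatedAt h) (zero_lt_neg_one_pow_mul_sub_convs h)

theorem abs_dens_mul_sub_nums_le (h : ¬(of v).TerminatedAt n) :
    |(of v).dens n * v - (of v).nums n| ≤ 1 / (of v).dens (n + 1) := by
  have hn := dens_pos_of_not_terminatedAt h
  calc |(of v).dens n * v - (of v).nums n| = (of v).dens n * |v - (of v).convs n| := by
        rw [dens_mul_sub_nums_eq h, abs_mul, abs_of_pos hn]
    _ ≤ (of v).dens n * (1 / ((of v).dens n * (of v).dens (n + 1))) :=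
        mul_le_mul_of_nonneg_left (abs_sub_convs_le h) hn.le
    _ = 1 / (of v).dens (n + 1) := by field_simp

theorem neg_one_pow_mul_dens_mul_sub_nums_le (h : ¬(of v).TerminatedAt n) :
    (-1) ^ n * ((of v).dens n * v - (of v).nums n) ≤ 1 / (of v).dens (n + 1) := by
  refine (le_abs_self _).trans ?_
  rw [abs_mul, abs_pow, abs_neg, abs_one, one_pow, one_mul]
  exact abs_dens_mul_sub_nums_le h

end GenContFract

theorem Irrational.not_terminatedAt {x : ℝ} (hx : Irrational x) (n : ℕ) :
    ¬(GenContFract.of x).TerminatedAt n := fun hn => by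
  obtain ⟨q, hq⟩ := (GenContFract.terminates_iff_rat x).1 ⟨n, hn⟩
  exact hx ⟨q, hq.symm⟩

open GenContFract

theorem stmt19_general (α : ℝ) (hα : Irrational α)
    (n : ℕ) (a b : ℝ) (ha : 0 ≤ a) (hb : b ≤ 1)
    (hlen : 1 / cfDen α (n + 1) < b - a) (θ : ℝ) :
    ∃ j : ℕ, (j : ℝ) < cfDen α (n + 1) + cfDen α n ∧
      Int.fract (θ + j * α) ∈ Set.Ioo a b := by
  unfold cfDen at hlen ⊢
  have hnt := hα.not_terminatedAt
  have hlen' :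
      1 / (GenContFract.of α).dens (n + 1 + 1) ≤ 1 / (GenContFract.of α).dens (n + 1) :=
    one_div_le_one_div_of_le (dens_pos_of_not_terminatedAt (hnt _)) of_den_mono
  have hpos := zero_lt_neg_one_pow_mul_dens_mul_sub_nums (hnt n)
  have hle := neg_one_pow_mul_dens_mul_sub_nums_le (hnt n)
  have hpos' := zero_lt_neg_one_pow_mul_dens_mul_sub_nums (hnt (n + 1))
  have hle' := neg_one_pow_mul_dens_mul_sub_nums_le (hnt (n + 1))
  obtain ⟨p, hp⟩ := exists_int_eq_nums α n
  obtain ⟨q, hq⟩ := exists_nat_eq_dens α n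
  obtain ⟨p', hp'⟩ := exists_int_eq_nums α (n + 1)
  obtain ⟨q', hq'⟩ := exists_nat_eq_dens α (n + 1)
  rw [hp, hq] at hpos hle
  rw [hp', hq'] at hpos' hle'
  obtain ⟨j, hj, hmem⟩ := exists_fract_add_mul_mem_Ioo_of_alternating (θ := θ) n ha hb
    hpos (hle.trans_lt hlen) hpos' ((hle'.trans hlen').trans_lt hlen)
  refine ⟨j, ?_, hmem⟩
  rw [hq, hq']
  exact_mod_cast hj

/-- If `Δ = (a,b) ⊆ [0,1]` is an interval with `|Δ| > 1/q_{n+1}`, then for any `θ`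
there exists `j ∈ {0, 1, …, q_{n+1} + q_n - 1}` such that `θ + jα (mod 1) ∈ Δ`. -/
theorem stmt19 (α : ℝ) (hα : Irrational α) (hα0 : 0 < α) (hα1 : α < 1)
    (n : ℕ) (a b : ℝ) (ha : 0 ≤ a) (hb : b ≤ 1)
    (hlen : 1 / cfDen α (n + 1) < b - a) (θ : ℝ) :
    ∃ j : ℕ, (j : ℝ) < cfDen α (n + 1) + cfDen α n ∧
      Int.fract (θ + j * α) ∈ Set.Ioo a b :=
  stmt19_general α hα n a b ha hb hlen θ
end
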